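/- For 0 < q < 1, z > 0, and n ≥ 1, we have J_{n-1}(q;z) · J_{n+1}(q;z) < (J_n(q;z))^2, where J_n(q;z) = Σ_{k=n+1}^∞ q^{k(k-1)/2} z^k/(q;q)_k is the remainder of the q-exponential function E(q;z). -/

import Mathlib

/-!
The terms `a k = q^(k(k-1)/2) z^k / (q;q)_k` are positive with ratio
`a (k+1) / a k = q^k z / (1 - q^(k+1))`, which decreases strictly in `k`. For any positive
summable sequence with strictly decreasing ratios, the tails `T m = ∑_{k ≥ m} a k` satisfy
`T n T (n+2) < T (n+1)²`: writing `T n = a n + T (n+1)` and `T (n+1) = a (n+1) + T (n+2)`, this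
reduces to `a n · T (n+2) < a (n+1) · T (n+1)`, which holds termwise since
`a (j+1) / a j < a (n+1) / a n` for every `j > n`.
-/

open Finset Filter Topology

noncomputable def qPoch (q : ℝ) (m : ℕ) : ℝ := ∏ j ∈ Finset.range m, (1 - q ^ (j + 1))

/-- Tail of the q-exponential e(q;z) starting at index m; I_n(q;z) = qexpTail q z (n+1). -/
noncomputable def qexpTail (q z : ℝ) (m : ℕ) : ℝ := ∑' k : ℕ, z ^ (m + k) / qPoch q (m + k)

/-- Tail of the q-exponential E(q;z) starting at index m; J_n(q;z) = qExpTail q z (n+1). -/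
noncomputable def qExpTail (q z : ℝ) (m : ℕ) : ℝ :=
  ∑' k : ℕ, q ^ ((m + k) * (m + k - 1) / 2) * z ^ (m + k) / qPoch q (m + k)

noncomputable def seqTail (a : ℕ → ℝ) (m : ℕ) : ℝ := ∑' k, a (m + k)

section seqTail

variable {a : ℕ → ℝ}

lemma Summable.comp_add_left (hsum : Summable a) (m : ℕ) : Summable fun k => a (m + k) := by
  simpa only [add_comm m] using (summable_nat_add_iff m).2 hsum

lemma seqTail_eq_add (hsum : Summable a) (m : ℕ) : seqTail a m = a m + seqTail a (m + 1) := by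
  simp only [seqTail, (hsum.comp_add_left m).tsum_eq_zero_add, add_zero, add_assoc, add_comm 1]

lemma mul_seqTail_lt_mul_seqTail (hpos : ∀ k, 0 < a k) (hsum : Summable a)
    (hratio : StrictAnti fun k => a (k + 1) / a k) (n : ℕ) :
    a n * seqTail a (n + 2) < a (n + 1) * seqTail a (n + 1) := by
  have hterm : ∀ k, a n * a (n + 2 + k) < a (n + 1) * a (n + 1 + k) := by
    intro k
    have h := hratio (by omega : n < n + 1 + k)
    dsimp only at h
    rw [show n + 1 + k + 1 = n + 2 + k by omega, div_lt_div_iff₀ (hpos _) (hpos _)] at h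
    linarith
  simp only [seqTail, ← tsum_mul_left]
  exact Summable.tsum_lt_tsum (fun k => (hterm k).le) (hterm 0)
    ((hsum.comp_add_left _).mul_left _) ((hsum.comp_add_left _).mul_left _)

theorem seqTail_mul_seqTail_lt_sq (hpos : ∀ k, 0 < a k) (hsum : Summable a)
    (hratio : StrictAnti fun k => a (k + 1) / a k) (n : ℕ) :
    seqTail a n * seqTail a (n + 2) < seqTail a (n + 1) ^ 2 := by
  have h := mul_seqTail_lt_mul_seqTail hpos hsum hratio n
  rw [seqTail_eq_add hsum n, sq]
  nth_rw 2 [seqTail_eq_add hsum (n + 1)]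
  linarith

end seqTail

lemma qPoch_succ (q : ℝ) (k : ℕ) : qPoch q (k + 1) = qPoch q k * (1 - q ^ (k + 1)) :=
  prod_range_succ _ _

noncomputable def qExpTerm (q z : ℝ) (k : ℕ) : ℝ := q ^ (k * (k - 1) / 2) * z ^ k / qPoch q k

section qExpTerm

variable {q : ℝ} (hq0 : 0 < q) (hq1 : q < 1)
include hq0 hq1

lemma one_sub_pow_succ_pos (k : ℕ) : 0 < 1 - q ^ (k + 1) :=
  sub_pos.2 (pow_lt_one₀ hq0.le hq1 k.succ_ne_zero)

lemma qPoch_pos (m : ℕ) : 0 < qPoch q m :=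
  prod_pos fun j _ => one_sub_pow_succ_pos hq0 hq1 j

variable {z : ℝ} (hz : 0 < z)
include hz

lemma qExpTerm_pos (k : ℕ) : 0 < qExpTerm q z k := by
  unfold qExpTerm
  have := qPoch_pos hq0 hq1 k
  positivity

lemma qExpTerm_succ_div (k : ℕ) :
    qExpTerm q z (k + 1) / qExpTerm q z k = q ^ k * z / (1 - q ^ (k + 1)) := by
  have hP := (qPoch_pos hq0 hq1 k).ne'
  have hD := (one_sub_pow_succ_pos hq0 hq1 k).ne'
  simp only [qExpTerm, qPoch_succ, Nat.triangle_succ, pow_add, pow_one]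
  field_simp

lemma strictAnti_qExpTerm_ratio : StrictAnti fun k => qExpTerm q z (k + 1) / qExpTerm q z k := by
  refine strictAnti_nat_of_succ_lt fun k => ?_
  simp only [qExpTerm_succ_div hq0 hq1 hz]
  refine div_lt_div₀ ?_ ?_ (by positivity) (one_sub_pow_succ_pos hq0 hq1 k)
  · exact mul_lt_mul_of_pos_right (pow_lt_pow_right_of_lt_one₀ hq0 hq1 k.lt_succ_self) hz
  · exact sub_le_sub_left (pow_le_pow_of_le_one hq0.le hq1.le (Nat.le_succ _)) 1

lemma summable_qExpTerm : Summable (qExpTerm q z) := by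
  refine summable_of_ratio_test_tendsto_lt_one zero_lt_one
    (Eventually.of_forall fun k => (qExpTerm_pos hq0 hq1 hz k).ne') ?_
  have hq_pow : Tendsto (fun k => q ^ k) atTop (𝓝 0) :=
    tendsto_pow_atTop_nhds_zero_of_lt_one hq0.le hq1
  have hlim : Tendsto (fun k => q ^ k * z / (1 - q * q ^ k)) atTop (𝓝 (0 * z / (1 - q * 0))) :=
    ((hq_pow.mul_const z).div (tendsto_const_nhds.sub (hq_pow.const_mul q)) (by simp))
  simp only [zero_mul, zero_div] at hlim
  refine hlim.congr fun k => ?_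
  rw [Real.norm_of_nonneg (qExpTerm_pos hq0 hq1 hz _).le,
    Real.norm_of_nonneg (qExpTerm_pos hq0 hq1 hz _).le, qExpTerm_succ_div hq0 hq1 hz, pow_succ']

end qExpTerm

theorem turan_right_J_general (q z : ℝ) (n : ℕ) (hq0 : 0 < q) (hq1 : q < 1)
    (hz : 0 < z) :
    qExpTail q z n * qExpTail q z (n + 2) < (qExpTail q z (n + 1)) ^ 2 :=
  seqTail_mul_seqTail_lt_sq (qExpTerm_pos hq0 hq1 hz) (summable_qExpTerm hq0 hq1 hz)
    (strictAnti_qExpTerm_ratio hq0 hq1 hz) n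

theorem turan_right_J (q z : ℝ) (n : ℕ) (hq0 : 0 < q) (hq1 : q < 1)
    (hz : 0 < z) (hn : 1 ≤ n) :
    qExpTail q z n * qExpTail q z (n + 2) < (qExpTail q z (n + 1)) ^ 2 :=
  turan_right_J_general q z n hq0 hq1 hz
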